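/- Fix integers n, m ≥ 1 with n even. Then: (a) for every n-element subset F ⊆ {1,…,n+m} with F ≠ {1,…,n}, there is a unique S ∈ X such that the vertex A(F) is one of the two vertices of D(S); and (b) for every n-element subset F ⊆ {1,…,n+m} with F ≠ {m+1,…,m+n}, there is a unique S ∈ X such that the vertex B(F) is one of the two vertices of D(S). -/
import Mathlib


noncomputable section
attribute [local instance] Classical.propDecidable

/-- The four symbols `A`, `B`, `C`, `D` labelling the vertices of the colored graph
`Λ(n,m)`: a vertex of `Λ(n,m)` is a pair `(X, S)` (written `X(S)` in the paper) of a
symbol `X ∈ {A,B,C,D}` and an `n`-element subset `S ⊆ {1,…,n+m}`. -/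
inductive Lbl | A | B | C | D
deriving DecidableEq

/-- `S ∈ X_j`, i.e. `S ⊆ {j+1,…,n+m}` and `#S = n+1-j`, for `1 ≤ j ≤ n`. -/
def inXj (n m j : ℕ) (S : Finset ℕ) : Prop :=
  1 ≤ j ∧ j ≤ n ∧ S ⊆ Finset.Icc (j+1) (n+m) ∧ S.card = n + 1 - j

/-- `S ∈ X = X_1 ∪ ⋯ ∪ X_n`. -/
def inX (n m : ℕ) (S : Finset ℕ) : Prop := ∃ j, inXj n m j S

/-- For `S = {i_1 < ⋯ < i_{n+1-j}} ∈ X_j` (where `j = n+1-#S`) and `S' = S \ {i_1}`,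
the pair `D(S) = D_j(S)` of vertices of `Λ(n,m)`:
`{A([j-1] ∪ S), A([j] ∪ S')}` if `j` is odd and `i_1 = j+1`;
`{A([j-1] ∪ S), B([i_1-j-1, i_1-2] ∪ S')}` if `j` is odd and `i_1 > j+1`;
`{B([i_1-j, i_1-2] ∪ S), B([i_1-j, i_1-1] ∪ S')}` if `j` is even. -/
def DS (n m : ℕ) (S : Finset ℕ) : (Lbl × Finset ℕ) × (Lbl × Finset ℕ) :=
  let j := n + 1 - S.card
  let i1 := if h : S.Nonempty then S.min' h else 0
  let S' := S.erase i1
  if Odd j then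
    if i1 = j + 1 then
      ((Lbl.A, Finset.Icc 1 (j-1) ∪ S), (Lbl.A, Finset.Icc 1 j ∪ S'))
    else
      ((Lbl.A, Finset.Icc 1 (j-1) ∪ S), (Lbl.B, Finset.Icc (i1-j-1) (i1-2) ∪ S'))
  else
    ((Lbl.B, Finset.Icc (i1-j) (i1-2) ∪ S), (Lbl.B, Finset.Icc (i1-j) (i1-1) ∪ S'))

lemma DS_fst_odd (n m : ℕ) (S : Finset ℕ) (j : ℕ) (hj : n + 1 - S.card = j)
    (hodd : Odd j) : (DS n m S).1 = (Lbl.A, Finset.Icc 1 (j-1) ∪ S) := by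
  simp only [DS, hj, if_pos hodd]
  split_ifs <;> rfl
lemma DS_snd_odd_eq (n m : ℕ) (S : Finset ℕ) (j : ℕ) (hj : n + 1 - S.card = j)
    (hodd : Odd j) (hne : S.Nonempty) (hmin : S.min' hne = j+1) :
    (DS n m S).2 = (Lbl.A, Finset.Icc 1 j ∪ S.erase (j+1)) := by
  simp only [DS, hj, if_pos hodd, dif_pos hne, hmin, if_true, eq_self_iff_true]
lemma DS_snd_odd_gt (n m : ℕ) (S : Finset ℕ) (j i1 : ℕ) (hj : n + 1 - S.card = j)
    (hodd : Odd j) (hne : S.Nonempty) (hmin : S.min' hne = i1) (hi : i1 ≠ j+1) :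
    (DS n m S).2 = (Lbl.B, Finset.Icc (i1-j-1) (i1-2) ∪ S.erase i1) := by
  simp only [DS, hj, if_pos hodd, dif_pos hne, hmin, if_neg hi]
lemma DS_fst_even (n m : ℕ) (S : Finset ℕ) (j i1 : ℕ) (hj : n + 1 - S.card = j)
    (hodd : ¬ Odd j) (hne : S.Nonempty) (hmin : S.min' hne = i1) :
    (DS n m S).1 = (Lbl.B, Finset.Icc (i1-j) (i1-2) ∪ S) := by
  simp only [DS, hj, if_neg hodd, dif_pos hne, hmin]
lemma DS_snd_even (n m : ℕ) (S : Finset ℕ) (j i1 : ℕ) (hj : n + 1 - S.card = j)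
    (hodd : ¬ Odd j) (hne : S.Nonempty) (hmin : S.min' hne = i1) :
    (DS n m S).2 = (Lbl.B, Finset.Icc (i1-j) (i1-1) ∪ S.erase i1) := by
  simp only [DS, hj, if_neg hodd, dif_pos hne, hmin]

lemma run_ex (F : Finset ℕ) (N a : ℕ) (ha : 1 ≤ a) (hF : F ⊆ Finset.Icc 1 N) :
    ∃ t, Finset.Icc a t ⊆ F ∧ (t+1) ∉ F ∧ a ≤ t + 1 ∧ (a ∈ F → a ≤ t) := by
  have hex : ∃ k, a + k ∉ F := ⟨N, fun h => by have := (Finset.mem_Icc.1 (hF h)).2; omega⟩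
  have hspec : a + Nat.find hex ∉ F := Nat.find_spec hex
  have hmin : ∀ k < Nat.find hex, a + k ∈ F := fun k hk => not_not.1 (Nat.find_min hex hk)
  refine ⟨a + Nat.find hex - 1, ?_, ?_, by omega, ?_⟩
  · intro x hx
    rw [Finset.mem_Icc] at hx
    have hx2 : x = a + (x - a) := by omega
    rw [hx2]; exact hmin _ (by omega)
  · have h : a + Nat.find hex - 1 + 1 = a + Nat.find hex := by omega
    rw [h]; exact hspec
  · intro haF
    have : Nat.find hex ≠ 0 := fun h0 => hspec (by rw [h0, Nat.add_zero]; exact haF)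
    omega

lemma run_unique (F : Finset ℕ) (a t t' : ℕ)
    (h1 : Finset.Icc a t ⊆ F) (h2 : (t+1) ∉ F) (h3 : a ≤ t+1)
    (h1' : Finset.Icc a t' ⊆ F) (h2' : (t'+1) ∉ F) (h3' : a ≤ t'+1) : t = t' := by
  by_contra hne
  rcases Nat.lt_or_ge t t' with h | h
  · exact h2 (h1' (Finset.mem_Icc.2 (by omega)))
  · exact h2' (h1 (Finset.mem_Icc.2 (by omega)))

theorem partB (n m : ℕ) (hn : 1 ≤ n) (hm : 1 ≤ m) (hev : Even n)
    (F : Finset ℕ) (hFsub : F ⊆ Finset.Icc 1 (n+m)) (hFcard : F.card = n)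
    (hFne : F ≠ Finset.Icc (m+1) (m+n)) :
    ∃! S : Finset ℕ, inX n m S ∧
      ((Lbl.B, F) = (DS n m S).1 ∨ (Lbl.B, F) = (DS n m S).2) := by
  have hevn : n % 2 = 0 := Nat.even_iff.1 hev
  have hFpos : F.Nonempty := by rw [← Finset.card_pos, hFcard]; omega
  set a := F.min' hFpos with haa
  have hamem : a ∈ F := F.min'_mem hFpos
  have hamin : ∀ x ∈ F, a ≤ x := fun x hx => F.min'_le x hx
  have ha1 : 1 ≤ a := (Finset.mem_Icc.1 (hFsub hamem)).1
  have hxub : ∀ x ∈ F, x ≤ n + m := fun x hx => (Finset.mem_Icc.1 (hFsub hx)).2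
  obtain ⟨e, he1, he2, -, he3⟩ := run_ex F (n+m) a ha1 hFsub
  have hae : a ≤ e := he3 hamem
  obtain ⟨c, hc⟩ : ∃ c, e = a + c := ⟨e - a, by omega⟩
  have hrcard : (Finset.Icc a e).card = c + 1 := by rw [Nat.card_Icc]; omega
  have hrn : c + 1 ≤ n := by
    have := Finset.card_le_card he1; rw [hrcard, hFcard] at this; exact this
  set W : Finset ℕ := F \ Finset.Icc a e with hW
  have hsd : ∀ x ∈ W, e + 2 ≤ x := by
    intro x hx
    rw [hW, Finset.mem_sdiff, Finset.mem_Icc] at hx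
    have h1 := hamin x hx.1
    have h2 : x ≠ e + 1 := fun h => he2 (h ▸ hx.1)
    omega
  have hsdcard : W.card = n - (c+1) := by
    rw [hW, Finset.card_sdiff_of_subset he1, hrcard, hFcard]
  have hunion : Finset.Icc a e ∪ W = F := Finset.union_sdiff_of_subset he1
  have hWsub : W ⊆ F := Finset.sdiff_subset
  -- upper bound e+1 ≤ n+m
  have he4 : e + 1 ≤ n + m := by
    by_cases hWne : W.Nonempty
    · obtain ⟨x, hx⟩ := hWne
      have := hsd x hx
      have := hxub x (hWsub hx)
      omega
    · have hWem : W = ∅ := Finset.not_nonempty_iff_eq_empty.1 hWne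
      have hFeq : F = Finset.Icc a e := by rw [← hunion, hWem, Finset.union_empty]
      have hcn : c + 1 = n := by rw [hFeq, hrcard] at hFcard; omega
      have ham1 : a ≤ m + 1 := by have := hxub e (he1 (Finset.mem_Icc.2 (by omega))); omega
      have ham : a ≠ m + 1 := by
        intro h
        apply hFne
        rw [hFeq, h]
        congr 1
        omega
      omega
  -- candidate witnesses
  set V1 : Finset ℕ := insert (e+1) W with hV1
  set V3 : Finset ℕ := insert (e+2) W with hV3
  have he1W : (e+1) ∉ W := fun h => by have := hsd _ h; omega
  have hV1card : V1.card = n - (c+1) + 1 := by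
    rw [hV1, Finset.card_insert_of_notMem he1W, hsdcard]
  have key : ∀ S₂ : Finset ℕ, (inX n m S₂ ∧
      ((Lbl.B, F) = (DS n m S₂).1 ∨ (Lbl.B, F) = (DS n m S₂).2)) →
      ((c % 2 = 1 ∧ S₂ = V1) ∨ (c % 2 = 0 ∧ (e+2) ∈ F ∧ S₂ = W) ∨
        (c % 2 = 0 ∧ (e+2) ∉ F ∧ S₂ = V3)) := by
    rintro S₂ ⟨⟨j₂, hj1, hj2, hj3, hj4⟩, hcase⟩
    have hne2 : S₂.Nonempty := by rw [← Finset.card_pos, hj4]; omega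
    have hjj : n + 1 - S₂.card = j₂ := by rw [hj4]; omega
    set i1 := S₂.min' hne2 with hi1
    have hi1mem : i1 ∈ S₂ := S₂.min'_mem hne2
    have hi1ge : j₂ + 1 ≤ i1 := (Finset.mem_Icc.1 (hj3 hi1mem)).1
    have hmin2 : ∀ x ∈ S₂, i1 ≤ x := fun x hx => S₂.min'_le x hx
    have hub2 : ∀ x ∈ S₂, x ≤ n + m := fun x hx => (Finset.mem_Icc.1 (hj3 hx)).2
    have her : ∀ x ∈ S₂.erase i1, i1 + 1 ≤ x := by
      intro x hx
      rw [Finset.mem_erase] at hx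
      have := hmin2 x hx.2
      have := hx.1
      omega
    by_cases hodd2 : Odd j₂
    · have hj2odd : j₂ % 2 = 1 := Nat.odd_iff.1 hodd2
      rcases hcase with hc' | hc'
      · rw [DS_fst_odd n m S₂ j₂ hjj hodd2] at hc'
        exact absurd (congrArg Prod.fst hc') (by simp)
      · by_cases hieq : i1 = j₂ + 1
        · rw [DS_snd_odd_eq n m S₂ j₂ hjj hodd2 hne2 (hi1 ▸ hieq)] at hc'
          exact absurd (congrArg Prod.fst hc') (by simp)
        · rw [DS_snd_odd_gt n m S₂ j₂ i1 hjj hodd2 hne2 rfl hieq] at hc'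
          have hF : F = Finset.Icc (i1-j₂-1) (i1-2) ∪ S₂.erase i1 := congrArg Prod.snd hc'
          have hi1gt : j₂ + 2 ≤ i1 := by omega
          have hamem' : (i1-j₂-1) ∈ F := by
            rw [hF, Finset.mem_union, Finset.mem_Icc]; left; omega
          have hallge : ∀ x ∈ F, i1-j₂-1 ≤ x := by
            intro x hx
            rw [hF, Finset.mem_union, Finset.mem_Icc] at hx
            rcases hx with h | h
            · omega
            · have := her x h; omega
          have ha' : a = i1-j₂-1 := le_antisymm (hamin _ hamem') (hallge a hamem)
          have hsub' : Finset.Icc a (i1-2) ⊆ F := by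
            rw [ha', hF]; exact Finset.subset_union_left
          have hnot' : (i1-2)+1 ∉ F := by
            rw [hF, Finset.mem_union, Finset.mem_Icc]
            rintro (h | h)
            · omega
            · have := her _ h; omega
          have he' : e = i1 - 2 :=
            run_unique F a e (i1-2) he1 he2 (by omega) hsub' hnot' (by omega)
          have hcj : c = j₂ - 1 := by omega
          have hi1e : i1 = e + 2 := by omega
          have hi1F : i1 ∉ F := by
            rw [hF, Finset.mem_union, Finset.mem_Icc]
            rintro (h | h)
            · omega
            · have := her _ h; omega
          have hdisj : Disjoint (Finset.Icc a e) (S₂.erase i1) := by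
            rw [Finset.disjoint_left]
            intro x hx hx2
            rw [Finset.mem_Icc] at hx
            have := her x hx2
            omega
          have herase : S₂.erase i1 = W := by
            rw [hW, hF]
            have hi : Finset.Icc (i1-j₂-1) (i1-2) = Finset.Icc a e := by rw [ha', he']
            rw [hi, Finset.union_sdiff_cancel_left hdisj]
          right; right
          refine ⟨by omega, by rw [← hi1e]; exact hi1F, ?_⟩
          rw [hV3, ← herase, ← hi1e]
          exact (Finset.insert_erase hi1mem).symm
    · have hj2ev : j₂ % 2 = 0 := by
        rcases Nat.even_or_odd j₂ with h | h
        · exact Nat.even_iff.1 h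
        · exact absurd h hodd2
      have hj22 : 2 ≤ j₂ := by omega
      rcases hcase with hc' | hc'
      · rw [DS_fst_even n m S₂ j₂ i1 hjj hodd2 hne2 rfl] at hc'
        have hF : F = Finset.Icc (i1-j₂) (i1-2) ∪ S₂ := congrArg Prod.snd hc'
        have hamem' : (i1-j₂) ∈ F := by
          rw [hF, Finset.mem_union, Finset.mem_Icc]; left; omega
        have hallge : ∀ x ∈ F, i1-j₂ ≤ x := by
          intro x hx
          rw [hF, Finset.mem_union, Finset.mem_Icc] at hx
          rcases hx with h | h
          · omega
          · have := hmin2 x h; omega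
        have ha' : a = i1-j₂ := le_antisymm (hamin _ hamem') (hallge a hamem)
        have hsub' : Finset.Icc a (i1-2) ⊆ F := by
          rw [ha', hF]; exact Finset.subset_union_left
        have hnot' : (i1-2)+1 ∉ F := by
          rw [hF, Finset.mem_union, Finset.mem_Icc]
          rintro (h | h)
          · omega
          · have := hmin2 _ h; omega
        have he' : e = i1 - 2 :=
          run_unique F a e (i1-2) he1 he2 (by omega) hsub' hnot' (by omega)
        have hi1e : i1 = e + 2 := by omega
        have hi1F : i1 ∈ F := by rw [hF]; exact Finset.mem_union_right _ hi1mem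
        have hdisj : Disjoint (Finset.Icc a e) S₂ := by
          rw [Finset.disjoint_left]
          intro x hx hx2
          rw [Finset.mem_Icc] at hx
          have := hmin2 x hx2
          omega
        right; left
        refine ⟨by omega, by rw [← hi1e]; exact hi1F, ?_⟩
        show S₂ = F \ Finset.Icc a e
        rw [hF]
        have hi : Finset.Icc (i1-j₂) (i1-2) = Finset.Icc a e := by rw [ha', he']
        rw [hi, Finset.union_sdiff_cancel_left hdisj]
      · rw [DS_snd_even n m S₂ j₂ i1 hjj hodd2 hne2 rfl] at hc'
        have hF : F = Finset.Icc (i1-j₂) (i1-1) ∪ S₂.erase i1 := congrArg Prod.snd hc'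
        have hamem' : (i1-j₂) ∈ F := by
          rw [hF, Finset.mem_union, Finset.mem_Icc]; left; omega
        have hallge : ∀ x ∈ F, i1-j₂ ≤ x := by
          intro x hx
          rw [hF, Finset.mem_union, Finset.mem_Icc] at hx
          rcases hx with h | h
          · omega
          · have := her x h; omega
        have ha' : a = i1-j₂ := le_antisymm (hamin _ hamem') (hallge a hamem)
        have hsub' : Finset.Icc a (i1-1) ⊆ F := by
          rw [ha', hF]; exact Finset.subset_union_left
        have hnot' : (i1-1)+1 ∉ F := by
          rw [hF, Finset.mem_union, Finset.mem_Icc]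
          rintro (h | h)
          · omega
          · have := her _ h; omega
        have he' : e = i1 - 1 :=
          run_unique F a e (i1-1) he1 he2 (by omega) hsub' hnot' (by omega)
        have hi1e : i1 = e + 1 := by omega
        have hdisj : Disjoint (Finset.Icc a e) (S₂.erase i1) := by
          rw [Finset.disjoint_left]
          intro x hx hx2
          rw [Finset.mem_Icc] at hx
          have := her x hx2
          omega
        have herase : S₂.erase i1 = W := by
          rw [hW, hF]
          have hi : Finset.Icc (i1-j₂) (i1-1) = Finset.Icc a e := by rw [ha', he']
          rw [hi, Finset.union_sdiff_cancel_left hdisj]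
        left
        refine ⟨by omega, ?_⟩
        rw [hV1, ← herase, ← hi1e]
        exact (Finset.insert_erase hi1mem).symm
  -- existence by cases
  rcases Nat.even_or_odd c with hcev | hcodd
  · have hc2 : c % 2 = 0 := Nat.even_iff.1 hcev
    have hcn' : c + 1 < n := by omega
    by_cases hin : (e+2) ∈ F
    · -- case W
      have hinW : (e+2) ∈ W := by
        rw [hW, Finset.mem_sdiff, Finset.mem_Icc]
        exact ⟨hin, by omega⟩
      have hWne : W.Nonempty := ⟨_, hinW⟩
      have hminW : W.min' hWne = e + 2 :=
        le_antisymm (Finset.min'_le _ _ hinW) (Finset.le_min' _ _ _ (fun y hy => hsd y hy))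
      have hcard2 : W.card = n + 1 - (c+2) := by rw [hsdcard]; omega
      have hjjW : n + 1 - W.card = c + 2 := by rw [hcard2]; omega
      have hnoddW : ¬ Odd (c+2) := by rw [Nat.odd_iff]; omega
      refine ⟨W, ⟨⟨c+2, by omega, by omega, ?_, hcard2⟩, ?_⟩, ?_⟩
      · intro x hx
        rw [Finset.mem_Icc]
        have := hsd x hx
        have := hxub x (hWsub hx)
        omega
      · left
        rw [DS_fst_even n m W (c+2) (e+2) hjjW hnoddW hWne hminW]
        have h1 : e + 2 - (c+2) = a := by omega
        have h2 : e + 2 - 2 = e := by omega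
        rw [h1, h2, hunion]
      · intro y hy
        rcases key y hy with ⟨h, -⟩ | ⟨-, -, h⟩ | ⟨-, h, -⟩
        · omega
        · exact h
        · exact absurd hin h
    · -- case V3
      have hWge : ∀ x ∈ W, e + 3 ≤ x := by
        intro x hx
        have := hsd x hx
        have : x ≠ e + 2 := fun h => hin (h ▸ hWsub hx)
        omega
      have hWne : W.Nonempty := by
        rw [hW, ← Finset.card_pos, Finset.card_sdiff_of_subset he1, hrcard, hFcard]; omega
      have he24 : e + 2 ≤ n + m := by
        obtain ⟨x, hx⟩ := hWne
        have := hWge x hx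
        have := hxub x (hWsub hx)
        omega
      have he2W : (e+2) ∉ W := fun h => by have := hWge _ h; omega
      have hV3ne : V3.Nonempty := ⟨e+2, Finset.mem_insert_self _ _⟩
      have hV3card : V3.card = n + 1 - (c+1) := by
        rw [hV3, Finset.card_insert_of_notMem he2W, hsdcard]; omega
      have hjj3 : n + 1 - V3.card = c + 1 := by rw [hV3card]; omega
      have hodd3 : Odd (c+1) := by rw [Nat.odd_iff]; omega
      have hmin3 : V3.min' hV3ne = e + 2 := by
        apply le_antisymm (Finset.min'_le _ _ (Finset.mem_insert_self _ _))
        apply Finset.le_min'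
        intro y hy
        rcases Finset.mem_insert.1 hy with h | h
        · omega
        · have := hWge y h; omega
      refine ⟨V3, ⟨⟨c+1, by omega, by omega, ?_, hV3card⟩, ?_⟩, ?_⟩
      · intro x hx
        rw [Finset.mem_Icc]
        rcases Finset.mem_insert.1 hx with h | h
        · omega
        · have := hWge x h
          have := hxub x (hWsub h)
          omega
      · right
        rw [DS_snd_odd_gt n m V3 (c+1) (e+2) hjj3 hodd3 hV3ne hmin3 (by omega)]
        have h1 : e + 2 - (c+1) - 1 = a := by omega
        have h2 : e + 2 - 2 = e := by omega
        rw [h1, h2, hV3, Finset.erase_insert he2W, hunion]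
      · intro y hy
        rcases key y hy with ⟨h, -⟩ | ⟨-, h, -⟩ | ⟨-, -, h⟩
        · omega
        · exact absurd h hin
        · exact h
  · -- case V1
    have hc2 : c % 2 = 1 := Nat.odd_iff.1 hcodd
    have hV1ne : V1.Nonempty := ⟨e+1, Finset.mem_insert_self _ _⟩
    have hV1card' : V1.card = n + 1 - (c+1) := by rw [hV1card]; omega
    have hjj1 : n + 1 - V1.card = c + 1 := by rw [hV1card']; omega
    have hnodd1 : ¬ Odd (c+1) := by rw [Nat.odd_iff]; omega
    have hmin1 : V1.min' hV1ne = e + 1 := by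
      apply le_antisymm (Finset.min'_le _ _ (Finset.mem_insert_self _ _))
      apply Finset.le_min'
      intro y hy
      rcases Finset.mem_insert.1 hy with h | h
      · omega
      · have := hsd y h; omega
    refine ⟨V1, ⟨⟨c+1, by omega, by omega, ?_, hV1card'⟩, ?_⟩, ?_⟩
    · intro x hx
      rw [Finset.mem_Icc]
      rcases Finset.mem_insert.1 hx with h | h
      · omega
      · have := hsd x h
        have := hxub x (hWsub h)
        omega
    · right
      rw [DS_snd_even n m V1 (c+1) (e+1) hjj1 hnodd1 hV1ne hmin1]
      have h1 : e + 1 - (c+1) = a := by omega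
      have h2 : e + 1 - 1 = e := by omega
      rw [h1, h2, hV1, Finset.erase_insert he1W, hunion]
    · intro y hy
      rcases key y hy with ⟨-, h⟩ | ⟨h, -, -⟩ | ⟨h, -, -⟩
      · exact h
      · omega
      · omega

theorem partA (n m : ℕ) (hn : 1 ≤ n) (hm : 1 ≤ m) (hev : Even n)
    (F : Finset ℕ) (hFsub : F ⊆ Finset.Icc 1 (n+m)) (hFcard : F.card = n)
    (hFne : F ≠ Finset.Icc 1 n) :
    ∃! S : Finset ℕ, inX n m S ∧
      ((Lbl.A, F) = (DS n m S).1 ∨ (Lbl.A, F) = (DS n m S).2) := by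
  obtain ⟨t, ht1, ht2, -⟩ := run_ex F (n+m) 1 le_rfl hFsub
  have htcard : (Finset.Icc 1 t).card = t := by simp
  have htn : t ≤ n := by have := Finset.card_le_card ht1; omega
  have htlt : t < n := by
    rcases eq_or_lt_of_le htn with h | h
    · exfalso; apply hFne
      exact (Finset.eq_of_subset_of_card_le (h ▸ ht1) (by simp [hFcard])).symm
    · exact h
  have hsd : ∀ x ∈ F \ Finset.Icc 1 t, t + 2 ≤ x := by
    intro x hx
    rw [Finset.mem_sdiff, Finset.mem_Icc] at hx
    have hx1 : 1 ≤ x := (Finset.mem_Icc.1 (hFsub hx.1)).1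
    have hx3 : x ≠ t + 1 := fun h => ht2 (h ▸ hx.1)
    omega
  have hsdcard : (F \ Finset.Icc 1 t).card = n - t := by
    rw [Finset.card_sdiff_of_subset ht1, htcard, hFcard]
  have hxub : ∀ x ∈ F, x ≤ n + m := fun x hx => (Finset.mem_Icc.1 (hFsub hx)).2
  have hunion : Finset.Icc 1 t ∪ (F \ Finset.Icc 1 t) = F := Finset.union_sdiff_of_subset ht1
  -- the two candidate witnesses
  set W0 : Finset ℕ := F \ Finset.Icc 1 t with hW0
  set W1 : Finset ℕ := insert (t+1) W0 with hW1
  have htnotW0 : (t+1) ∉ W0 := fun h => ht2 (Finset.mem_sdiff.1 h).1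
  have hW1card : W1.card = n - t + 1 := by
    rw [hW1, Finset.card_insert_of_notMem htnotW0, hsdcard]
  -- key uniqueness fact
  have key : ∀ S₂ : Finset ℕ, (inX n m S₂ ∧
      ((Lbl.A, F) = (DS n m S₂).1 ∨ (Lbl.A, F) = (DS n m S₂).2)) →
      ((Even t ∧ S₂ = W0) ∨ (¬ Even t ∧ S₂ = W1)) := by
    rintro S₂ ⟨⟨j₂, hj1, hj2, hj3, hj4⟩, hcase⟩
    have hne2 : S₂.Nonempty := by
      rw [← Finset.card_pos, hj4]; omega
    have hjj : n + 1 - S₂.card = j₂ := by rw [hj4]; omega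
    set i1 := S₂.min' hne2 with hi1
    have hi1mem : i1 ∈ S₂ := S₂.min'_mem hne2
    have hi1ge : j₂ + 1 ≤ i1 := (Finset.mem_Icc.1 (hj3 hi1mem)).1
    have hge : ∀ x ∈ S₂, j₂ + 1 ≤ x := fun x hx => (Finset.mem_Icc.1 (hj3 hx)).1
    by_cases hodd2 : Odd j₂
    · rcases hcase with hc | hc
      · rw [DS_fst_odd n m S₂ j₂ hjj hodd2] at hc
        have hF : F = Finset.Icc 1 (j₂-1) ∪ S₂ := congrArg Prod.snd hc
        have hsub1 : Finset.Icc 1 (j₂-1) ⊆ F := hF ▸ Finset.subset_union_left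
        have hnot1 : (j₂-1) + 1 ∉ F := by
          have h : (j₂-1) + 1 = j₂ := by omega
          rw [h, hF, Finset.mem_union, Finset.mem_Icc]
          rintro (h' | h')
          · omega
          · exact absurd (hge _ h') (by omega)
        have ht' : t = j₂ - 1 := run_unique F 1 t (j₂-1) ht1 ht2 (by omega) hsub1 hnot1 (by omega)
        have htev : Even t := by
          rcases hodd2 with ⟨k, hk⟩; exact ⟨k, by omega⟩
        left
        refine ⟨htev, ?_⟩
        have hdisj : Disjoint (Finset.Icc 1 t) S₂ := by
          rw [Finset.disjoint_left]
          intro x hx hx2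
          have := hge x hx2
          rw [Finset.mem_Icc] at hx
          omega
        rw [hW0, hF]
        have h : Finset.Icc 1 (j₂ - 1) = Finset.Icc 1 t := by rw [ht']
        rw [h, Finset.union_sdiff_cancel_left hdisj]
      · by_cases hieq : i1 = j₂ + 1
        · rw [DS_snd_odd_eq n m S₂ j₂ hjj hodd2 hne2 (hi1 ▸ hieq)] at hc
          have hF : F = Finset.Icc 1 j₂ ∪ S₂.erase (j₂+1) := congrArg Prod.snd hc
          have hsub1 : Finset.Icc 1 j₂ ⊆ F := hF ▸ Finset.subset_union_left
          have hnot1 : j₂ + 1 ∉ F := by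
            rw [hF, Finset.mem_union, Finset.mem_Icc, Finset.mem_erase]
            rintro (h' | h')
            · omega
            · exact h'.1 rfl
          have ht' : t = j₂ := run_unique F 1 t j₂ ht1 ht2 (by omega) hsub1 hnot1 (by omega)
          right
          refine ⟨by rw [ht']; exact (Nat.not_even_iff_odd.2 hodd2), ?_⟩
          have hdisj : Disjoint (Finset.Icc 1 t) (S₂.erase (j₂+1)) := by
            rw [Finset.disjoint_left]
            intro x hx hx2
            rw [Finset.mem_erase] at hx2
            have := hge x hx2.2
            rw [Finset.mem_Icc] at hx
            have : x ≠ j₂ + 1 := hx2.1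
            omega
          have herase : S₂.erase (j₂+1) = W0 := by
            rw [hW0, hF]
            have h : Finset.Icc 1 j₂ = Finset.Icc 1 t := by rw [ht']
            rw [h, Finset.union_sdiff_cancel_left hdisj]
          rw [hW1, ← herase, ht']
          exact (Finset.insert_erase (hieq ▸ hi1mem)).symm
        · rw [DS_snd_odd_gt n m S₂ j₂ i1 hjj hodd2 hne2 rfl hieq] at hc
          exact absurd (congrArg Prod.fst hc) (by simp)
    · rcases hcase with hc | hc
      · rw [DS_fst_even n m S₂ j₂ i1 hjj hodd2 hne2 rfl] at hc
        exact absurd (congrArg Prod.fst hc) (by simp)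
      · rw [DS_snd_even n m S₂ j₂ i1 hjj hodd2 hne2 rfl] at hc
        exact absurd (congrArg Prod.fst hc) (by simp)
  by_cases hpar : Even t
  · refine ⟨W0, ⟨⟨t+1, by omega, by omega, ?_, by rw [hsdcard]; omega⟩, ?_⟩, ?_⟩
    · intro x hx
      rw [Finset.mem_Icc]
      exact ⟨hsd x hx, hxub x (Finset.mem_sdiff.1 hx).1⟩
    · left
      rw [DS_fst_odd n m W0 (t+1) (by rw [hsdcard]; omega) (Even.add_one hpar)]
      simp only [Nat.add_sub_cancel]
      rw [hunion]
    · intro y hy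
      rcases key y hy with ⟨-, h⟩ | ⟨h, -⟩
      · exact h
      · exact absurd hpar h
  · have htodd : Odd t := Nat.not_even_iff_odd.1 hpar
    have ht1le : 1 ≤ t := htodd.pos
    have hminW1 : W1.min' ⟨t+1, Finset.mem_insert_self _ _⟩ = t + 1 := by
      apply le_antisymm (Finset.min'_le _ _ (Finset.mem_insert_self _ _))
      apply Finset.le_min'
      intro y hy
      rcases Finset.mem_insert.1 hy with h | h
      · omega
      · have := hsd y h; omega
    refine ⟨W1, ⟨⟨t, ht1le, by omega, ?_, by rw [hW1card]; omega⟩, ?_⟩, ?_⟩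
    · intro x hx
      rcases Finset.mem_insert.1 hx with h | h
      · rw [Finset.mem_Icc]; omega
      · rw [Finset.mem_Icc]
        exact ⟨by have := hsd x h; omega, hxub x (Finset.mem_sdiff.1 h).1⟩
    · right
      rw [DS_snd_odd_eq n m W1 t (by rw [hW1card]; omega) htodd ⟨t+1, Finset.mem_insert_self _ _⟩ hminW1]
      rw [hW1, Finset.erase_insert htnotW0, hunion]
    · intro y hy
      rcases key y hy with ⟨h, -⟩ | ⟨-, h⟩
      · exact absurd h hpar
      · exact h


/-- For `n` even: (a) for every `n`-subset `F ⊆ {1,…,n+m}` with `F ≠ {1,…,n}` there is a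
unique `S ∈ X` such that `A(F)` is one of the two vertices of `D(S)`; (b) for every
`n`-subset `F ⊆ {1,…,n+m}` with `F ≠ {m+1,…,m+n}` there is a unique `S ∈ X` such that
`B(F)` is one of the two vertices of `D(S)`. -/
theorem stmt11 (n m : ℕ) (hn : 1 ≤ n) (hm : 1 ≤ m) (hev : Even n) :
    (∀ F : Finset ℕ, F ⊆ Finset.Icc 1 (n+m) → F.card = n → F ≠ Finset.Icc 1 n →
      ∃! S : Finset ℕ, inX n m S ∧
        ((Lbl.A, F) = (DS n m S).1 ∨ (Lbl.A, F) = (DS n m S).2)) ∧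
    (∀ F : Finset ℕ, F ⊆ Finset.Icc 1 (n+m) → F.card = n → F ≠ Finset.Icc (m+1) (m+n) →
      ∃! S : Finset ℕ, inX n m S ∧
        ((Lbl.B, F) = (DS n m S).1 ∨ (Lbl.B, F) = (DS n m S).2)) := by
  exact ⟨fun F h1 h2 h3 => partA n m hn hm hev F h1 h2 h3,
    fun F h1 h2 h3 => partB n m hn hm hev F h1 h2 h3⟩
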